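/- arXiv:1804.07624 — 4 statements merged into one kernel-verified Lean document; each statement's English description precedes it below -/
import Mathlib

section
/- Let $(X_1,\dots,X_N)$ be a $T_N$-configuration in $\mathbb{M}^{p\times q}$, i.e. there exist matrices $P, C_1,\dots,C_N$ with $\operatorname{rank}(C_j)=1$, $\sum_{j=1}^N C_j = 0$, and reals $\kappa_j>1$ such that $X_j = P + C_1 + \dots + C_{j-1} + \kappa_j C_j$ for each $j$. Set $P_1=P$ and $P_j = P + C_1 + \dots + C_{j-1}$. Then for every rank-one convex function $g\colon \mathbb{M}^{p\times q}\to\mathbb{R}$ with $g\ge 0$ and $g(X_j)=0$ for all $j$, one has $g(P_j)=0$ for all $j=1,\dots,N$. -/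
/-!
Rank-one convexity along the segment from `P_j` to `X_j = P_j + κ_j C_j`, which passes through
`P_{j+1} = P_j + C_j`, gives `g(P_{j+1}) ≤ (1 - 1/κ_j) g(P_j)` once `g(X_j) = 0`. Going once
around the cycle, the values `g(P_j) ≥ 0` cannot decrease strictly anywhere, since their sum is
unchanged by the cyclic shift; so `g(P_j) ≤ (1 - 1/κ_j) g(P_j)`, which forces `g(P_j) = 0`.
-/

open Finset

/-- A function on `p × q` real matrices is rank-one convex if it is convex along
every rank-one direction. -/
def RankOneConvex {p q : ℕ} (g : Matrix (Fin p) (Fin q) ℝ → ℝ) : Prop :=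
  ∀ X Y : Matrix (Fin p) (Fin q) ℝ, Matrix.rank Y = 1 →
    ConvexOn ℝ Set.univ (fun t : ℝ => g (X + t • Y))

theorem RankOneConvex.apply_add_le {p q : ℕ} {g : Matrix (Fin p) (Fin q) ℝ → ℝ}
    (hg : RankOneConvex g) {X Y : Matrix (Fin p) (Fin q) ℝ} (hY : Y.rank = 1) {κ : ℝ}
    (hκ : 1 ≤ κ) : g (X + Y) ≤ κ⁻¹ * g (X + κ • Y) + (1 - κ⁻¹) * g X := by
  have hκ₀ : 0 < κ := zero_lt_one.trans_le hκ
  have h := (hg X Y hY).2 (Set.mem_univ κ) (Set.mem_univ 0) (inv_nonneg.2 hκ₀.le)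
    (sub_nonneg.2 (inv_le_one_of_one_le₀ hκ)) (add_sub_cancel _ _)
  simpa [inv_mul_cancel₀ hκ₀.ne'] using h

theorem Fin.sum_Iio_finRotate {M : Type*} [AddCommMonoid M] {n : ℕ} (s : Fin n → M)
    (hs : ∑ i, s i = 0) (j : Fin n) :
    ∑ i ∈ Iio (finRotate n j), s i = ∑ i ∈ Iio j, s i + s j := by
  cases n with
  | zero => exact j.elim0
  | succ n =>
    induction j using Fin.lastCases with
    | last =>
      rw [finRotate_last, ← bot_eq_zero, Iio_bot, sum_empty, Iio_last_eq_map, sum_map, ← hs,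
        Fin.sum_univ_castSucc]
      rfl
    | cast i =>
      have hIio : Iio i.succ = insert i.castSucc (Iio i.castSucc) := by
        ext k
        simp only [mem_Iio, mem_insert, Fin.lt_def, Fin.ext_iff, Fin.val_succ, Fin.val_castSucc]
        omega
      rw [finRotate_apply, Fin.coeSucc_eq_succ, hIio, sum_insert (by simp), add_comm]

theorem eq_zero_of_apply_perm_le_mul {ι R : Type*} [Fintype ι] [CommRing R] [LinearOrder R]
    [IsStrictOrderedRing R] (σ : Equiv.Perm ι) {a c : ι → R} (ha : ∀ i, 0 ≤ a i)
    (hc : ∀ i, c i < 1) (h : ∀ i, a (σ i) ≤ c i * a i) (i : ι) : a i = 0 := by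
  have hle : ∀ i ∈ univ, a (σ i) ≤ a i := fun i _ =>
    (h i).trans (mul_le_of_le_one_left (ha i) (hc i).le)
  -- the shift by `σ` preserves the total, so no term can drop
  have hfix : a (σ i) = a i :=
    (sum_eq_sum_iff_of_le hle).1 (Equiv.sum_comp σ a) i (mem_univ i)
  have : (1 - c i) * a i ≤ 0 := by linarith [h i]
  exact le_antisymm (nonpos_of_mul_nonpos_right this (sub_pos.2 (hc i))) (ha i)

/-- In a `T_N`-configuration, every nonnegative rank-one convex function vanishing
on the `X_j`'s also vanishes at all the base points `P_j`. -/
theorem stmt0 {p q N : ℕ}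
    (P : Matrix (Fin p) (Fin q) ℝ) (C : Fin N → Matrix (Fin p) (Fin q) ℝ)
    (κ : Fin N → ℝ)
    (hC : ∀ j, Matrix.rank (C j) = 1) (hsum : ∑ j, C j = 0) (hκ : ∀ j, 1 < κ j)
    (X Pm : Fin N → Matrix (Fin p) (Fin q) ℝ)
    (hPm : ∀ j, Pm j = P + ∑ i ∈ Finset.univ.filter (fun i => i < j), C i)
    (hX : ∀ j, X j = Pm j + κ j • C j)
    (g : Matrix (Fin p) (Fin q) ℝ → ℝ)
    (hg : RankOneConvex g) (hg0 : ∀ Z, 0 ≤ g Z) (hgX : ∀ j, g (X j) = 0) :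
    ∀ j, g (Pm j) = 0 := by
  have hstep : ∀ j, Pm (finRotate N j) = Pm j + C j := fun j => by
    rw [hPm, hPm, filter_gt_eq_Iio, filter_gt_eq_Iio, Fin.sum_Iio_finRotate C hsum, add_assoc]
  have hdecay : ∀ j, g (Pm (finRotate N j)) ≤ (1 - (κ j)⁻¹) * g (Pm j) := fun j => by
    rw [hstep]
    simpa [← hX, hgX] using hg.apply_add_le (X := Pm j) (hC j) (hκ j).le
  exact eq_zero_of_apply_perm_le_mul (finRotate N) (fun j => hg0 _)
    (fun j => sub_lt_self 1 (inv_pos.2 (zero_lt_one.trans (hκ j)))) hdecay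
end

section
/- Let $\sigma\colon \mathbb{M}^{m\times n}\to\mathbb{M}^{m\times n}$ satisfy the strong parabolicity condition: $\langle \sigma(A+p\otimes\alpha)-\sigma(A), p\otimes\alpha\rangle \ge \nu|p|^2|\alpha|^2$ for all $A\in\mathbb{M}^{m\times n}$, $p\in\mathbb{R}^m$, $\alpha\in\mathbb{R}^n$, with $\nu>0$. Let $\mathcal{K}$ be the set of matrices $\begin{bmatrix} A & a \\ (B^i) & (\sigma^i(A))\end{bmatrix}\in\mathbb{M}^{(m+nm)\times(n+1)}$ with $\operatorname{tr}(B^i)=0$ for all $i$. If $Y\in\mathcal{K}$ and $Y+C\in\mathcal{K}$ with $\operatorname{rank}(C)=1$, then the entire segment $\{Y+tC : t\in[0,1]\}$ is contained in $\mathcal{K}$; consequently the lamination hull satisfies $\mathcal{K}^{lc}=\mathcal{K}$. -/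
/-- The block-matrix space `𝕄^{(m+nm)×(n+1)}`: rows indexed by `Fin m ⊕ (Fin m × Fin n)`,
columns by `Fin n ⊕ Unit`. -/
abbrev BM (m n : ℕ) := Matrix (Fin m ⊕ (Fin m × Fin n)) (Fin n ⊕ Unit) ℝ

/-- The block matrix `[A a; (Bⁱ) (bⁱ)]`. -/
def blk {m n : ℕ} (A : Matrix (Fin m) (Fin n) ℝ) (a : Fin m → ℝ)
    (B : Fin m → Matrix (Fin n) (Fin n) ℝ) (b : Fin m → Fin n → ℝ) : BM m n :=
  Matrix.of fun r c =>
    match r, c with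
    | Sum.inl i, Sum.inl k => A i k
    | Sum.inl i, Sum.inr _ => a i
    | Sum.inr p, Sum.inl k => B p.1 p.2 k
    | Sum.inr p, Sum.inr _ => b p.1 p.2

/-- The spatial-gradient block `A` of a block matrix. -/
def Ablock {m n : ℕ} (X : BM m n) : Matrix (Fin m) (Fin n) ℝ :=
  Matrix.of fun i k => X (Sum.inl i) (Sum.inl k)

/-- The set `𝒦 = {[A a; (Bⁱ) (σⁱ(A))] : tr Bⁱ = 0}` associated to a flux `σ`. -/
def Kset {m n : ℕ} (σ : Matrix (Fin m) (Fin n) ℝ → Matrix (Fin m) (Fin n) ℝ) :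
    Set (BM m n) :=
  {X | (∀ i j, X (Sum.inr (i, j)) (Sum.inr ()) = σ (Ablock X) i j) ∧
    ∀ i, ∑ j, X (Sum.inr (i, j)) (Sum.inl j) = 0}

/-- One step of lamination: add convex combinations of rank-one connected pairs. -/
def lamStep {m n : ℕ} (E : Set (BM m n)) : Set (BM m n) :=
  E ∪ {Z | ∃ X ∈ E, ∃ Y ∈ E, Matrix.rank (X - Y) = 1 ∧
    ∃ t ∈ Set.Ioo (0 : ℝ) 1, Z = t • X + (1 - t) • Y}

/-- The lamination hull `E^{lc} = ⋃ᵢ E^{lc,i}`. -/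
def lamHull {m n : ℕ} (E : Set (BM m n)) : Set (BM m n) :=
  ⋃ k : ℕ, lamStep^[k] E


lemma rank_one_exists {R C' : Type*} [Fintype R] [Fintype C'] [DecidableEq C']
    (M : Matrix R C' ℝ) (h : M.rank = 1) :
    ∃ u v, M = Matrix.vecMulVec u v := by
  have h1 : Module.finrank ℝ ↥(LinearMap.range M.mulVecLin) ≤ 1 := h.le
  obtain ⟨u, hu⟩ := (Submodule.finrank_le_one_iff_isPrincipal _).mp h1
  have hcol : ∀ c : C', ∃ s : ℝ, (fun r => M r c) = s • u := by
    intro c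
    have hmem : (fun r => M r c) ∈ LinearMap.range M.mulVecLin := by
      refine ⟨Pi.single c 1, ?_⟩
      ext r
      simp [Matrix.mulVecLin_apply, Matrix.mulVec, dotProduct, Pi.single_apply]
    rw [hu, Submodule.mem_span_singleton] at hmem
    obtain ⟨s, hs⟩ := hmem
    exact ⟨s, hs.symm⟩
  choose v hv using hcol
  refine ⟨u, v, ?_⟩
  ext r c
  have := congrFun (hv c) r
  simp only [Pi.smul_apply, smul_eq_mul] at this
  rw [Matrix.vecMulVec_apply, this, mul_comm]

theorem seg_lemma {m n : ℕ}
    (σ : Matrix (Fin m) (Fin n) ℝ → Matrix (Fin m) (Fin n) ℝ) (ν : ℝ) (hν : 0 < ν)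
    (hpar : ∀ (A : Matrix (Fin m) (Fin n) ℝ) (p : Fin m → ℝ) (α : Fin n → ℝ),
      ν * (∑ i, p i ^ 2) * (∑ k, α k ^ 2) ≤
        ∑ i, ∑ k, (σ (A + Matrix.vecMulVec p α) i k - σ A i k) * (p i * α k)) :
    ∀ Y C : BM m n, Y ∈ Kset σ → Y + C ∈ Kset σ → Matrix.rank C = 1 →
      ∀ t ∈ Set.Icc (0 : ℝ) 1, Y + t • C ∈ Kset σ := by
  intro Y C hY hYC hrank t _
  obtain ⟨u, v, rfl⟩ := rank_one_exists C hrank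
  set p : Fin m → ℝ := fun i => u (Sum.inl i) with hp
  set α : Fin n → ℝ := fun k => v (Sum.inl k) with hα
  obtain ⟨hY1, hY2⟩ := hY
  obtain ⟨hYC1, hYC2⟩ := hYC
  -- the A-block of Y + C
  have hAb : Ablock (Y + Matrix.vecMulVec u v) = Ablock Y + Matrix.vecMulVec p α := by
    ext i k
    simp [Ablock, Matrix.add_apply, Matrix.vecMulVec_apply, hp, hα]
  -- trace of the B-block of C vanishes
  have htr : ∀ i, ∑ j, u (Sum.inr (i, j)) * v (Sum.inl j) = 0 := by
    intro i
    have h1 := hY2 i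
    have h2 := hYC2 i
    simp only [Matrix.add_apply, Finset.sum_add_distrib, h1,
      Matrix.vecMulVec_apply] at h2
    linarith
  -- parabolicity forces p ⊗ α = 0
  have hzero : ∀ i k, p i * α k = 0 := by
    have hpr := hpar (Ablock Y) p α
    have hrhs : ∑ i, ∑ k,
        (σ (Ablock Y + Matrix.vecMulVec p α) i k - σ (Ablock Y) i k) * (p i * α k) = 0 := by
      have hentry : ∀ i k, σ (Ablock Y + Matrix.vecMulVec p α) i k - σ (Ablock Y) i k =
          u (Sum.inr (i, k)) * v (Sum.inr ()) := by
        intro i k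
        have h1 := hY1 i k
        have h2 := hYC1 i k
        rw [hAb] at h2
        simp only [Matrix.add_apply, Matrix.vecMulVec_apply] at h2
        rw [← h2, ← h1]; ring
      calc ∑ i, ∑ k, (σ (Ablock Y + Matrix.vecMulVec p α) i k - σ (Ablock Y) i k) * (p i * α k)
          = ∑ i, (u (Sum.inl i) * v (Sum.inr ())) *
              ∑ k, u (Sum.inr (i, k)) * v (Sum.inl k) := by
            rw [Finset.sum_congr rfl]
            intro i _
            rw [Finset.mul_sum, Finset.sum_congr rfl]
            intro k _
            rw [hentry i k]; simp only [hp, hα]; ring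
        _ = 0 := by simp [htr]
    have hle : ν * (∑ i, p i ^ 2) * (∑ k, α k ^ 2) ≤ 0 := hrhs ▸ hpr
    have hps : (0:ℝ) ≤ ∑ i, p i ^ 2 := Finset.sum_nonneg fun i _ => sq_nonneg _
    have has : (0:ℝ) ≤ ∑ k, α k ^ 2 := Finset.sum_nonneg fun k _ => sq_nonneg _
    have hprod : (∑ i, p i ^ 2) * (∑ k, α k ^ 2) = 0 := by
      by_contra hne
      have hpos : 0 < (∑ i, p i ^ 2) * (∑ k, α k ^ 2) :=
        lt_of_le_of_ne (mul_nonneg hps has) (Ne.symm hne)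
      nlinarith
    intro i k
    rcases mul_eq_zero.mp hprod with h | h
    · have : p i = 0 := by
        have := (Finset.sum_eq_zero_iff_of_nonneg (fun i _ => sq_nonneg (p i))).mp h i
          (Finset.mem_univ i)
        exact pow_eq_zero_iff two_ne_zero |>.mp this
      rw [this]; ring
    · have : α k = 0 := by
        have := (Finset.sum_eq_zero_iff_of_nonneg (fun k _ => sq_nonneg (α k))).mp h k
          (Finset.mem_univ k)
        exact pow_eq_zero_iff two_ne_zero |>.mp this
      rw [this]; ring
  -- hence A-blocks agree
  have hAbt : Ablock (Y + t • Matrix.vecMulVec u v) = Ablock Y := by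
    ext i k
    simp only [Ablock, Matrix.of_apply, Matrix.add_apply, Matrix.smul_apply,
      Matrix.vecMulVec_apply, smul_eq_mul]
    have := hzero i k
    simp only [hp, hα] at this
    rw [this]; ring
  have hAb' : Ablock (Y + Matrix.vecMulVec u v) = Ablock Y := by
    rw [hAb]
    ext i k
    simp only [Matrix.add_apply, Matrix.vecMulVec_apply, hzero i k, add_zero]
  -- the last-column B entries of C vanish
  have hb0 : ∀ i j, u (Sum.inr (i, j)) * v (Sum.inr ()) = 0 := by
    intro i j
    have h1 := hY1 i j
    have h2 := hYC1 i j
    rw [hAb'] at h2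
    simp only [Matrix.add_apply, Matrix.vecMulVec_apply] at h2
    linarith
  constructor
  · intro i j
    rw [hAbt]
    simp only [Matrix.add_apply, Matrix.smul_apply, Matrix.vecMulVec_apply, smul_eq_mul,
      hb0 i j, mul_zero, add_zero]
    exact hY1 i j
  · intro i
    have h1 := hY2 i
    have h2 := htr i
    simp only [Matrix.add_apply, Matrix.smul_apply, Matrix.vecMulVec_apply, smul_eq_mul,
      Finset.sum_add_distrib, h1, ← Finset.mul_sum, h2, mul_zero, zero_add]

/-- Under strong parabolicity, rank-one segments with endpoints in `𝒦` stay in `𝒦`,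
and consequently `𝒦^{lc} = 𝒦`. -/
theorem stmt3 {m n : ℕ}
    (σ : Matrix (Fin m) (Fin n) ℝ → Matrix (Fin m) (Fin n) ℝ) (ν : ℝ) (hν : 0 < ν)
    (hpar : ∀ (A : Matrix (Fin m) (Fin n) ℝ) (p : Fin m → ℝ) (α : Fin n → ℝ),
      ν * (∑ i, p i ^ 2) * (∑ k, α k ^ 2) ≤
        ∑ i, ∑ k, (σ (A + Matrix.vecMulVec p α) i k - σ A i k) * (p i * α k)) :
    (∀ Y C : BM m n, Y ∈ Kset σ → Y + C ∈ Kset σ → Matrix.rank C = 1 →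
      ∀ t ∈ Set.Icc (0 : ℝ) 1, Y + t • C ∈ Kset σ) ∧
    lamHull (Kset σ) = Kset σ := by
  constructor
  · exact seg_lemma σ ν hν hpar
  · have hstep : lamStep (Kset σ) = Kset σ := by
      apply Set.Subset.antisymm
      · rintro Z (hZ | ⟨X, hX, Y, hY, hrank, t, ht, rfl⟩)
        · exact hZ
        · have hXY : Y + (X - Y) ∈ Kset σ := by simpa using hX
          have := seg_lemma σ ν hν hpar Y (X - Y) hY hXY hrank t
            ⟨ht.1.le, ht.2.le⟩
          have heq : t • X + (1 - t) • Y = Y + t • (X - Y) := by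
            rw [smul_sub]; module
          rw [heq]
          exact this
      · exact Set.subset_union_left
    have hiter : ∀ k : ℕ, lamStep^[k] (Kset σ) = Kset σ := by
      intro k
      induction k with
      | zero => rfl
      | succ k ih => rw [Function.iterate_succ_apply', ih, hstep]
    simp only [lamHull, hiter, Set.iUnion_const]
end

section
/- In the setting of Lemma 'lem-X-s': let $(X_1,\dots,X_N)$ be an admissible $T_N$-configuration in $\mathbb{M}^{(m+nm)\times(n+1)}$ with data $P = \begin{bmatrix}\tilde{A} & \tilde{a} \\ (\tilde{B}^i) & (\tilde{b}^i)\end{bmatrix}$, rank-one matrices $C_j = \begin{bmatrix} p_j\otimes\alpha_j & s_jp_j \\ (\beta_j^i\otimes\alpha_j) & (s_j\beta_j^i)\end{bmatrix}$, and $\kappa_j>1$. For $s\ne 0$ define $\tilde{P} = \begin{bmatrix}\tilde{A} & 0 \\ (0) & (\tilde{b}^i)\end{bmatrix}$ and $C_j^s = \begin{bmatrix} p_j\otimes\alpha_j & ss_jp_j \\ \frac{1}{s}(\beta_j^i\otimes\alpha_j) & (s_j\beta_j^i)\end{bmatrix}$. Then $(\tilde{X}_1^s,\dots,\tilde{X}_N^s)$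 defined by $\tilde{X}_j^s = \tilde{P} + C_1^s + \dots + C_{j-1}^s + \kappa_j C_j^s$ is again an admissible $T_N$-configuration, and the diagonal projection satisfies $\mathbb{P}(T(\tilde{X}_1^s,\dots,\tilde{X}_N^s)) = \mathbb{P}(T(X_1,\dots,X_N))$; moreover if $X_j\in\mathcal{K}$ then $\tilde{X}_j^s\in\mathcal{K}$. -/
/-- The "diagonal" projection `ℙ([A a; (Bⁱ) (bⁱ)]) = [A, (bⁱ)]`. -/
def Pproj {m n : ℕ} (X : BM m n) :
    Matrix (Fin m) (Fin n) ℝ × (Fin m → Fin n → ℝ) :=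
  (Ablock X, fun i j => X (Sum.inr (i, j)) (Sum.inr ()))

open Matrix

section Rescale

variable {α β ι ι' κ κ' : Type*}

def timeWeight (t : ℝ) : α ⊕ β → ℝ := Sum.elim (fun _ => 1) fun _ => t

/-- `rescale s` sends `C_j` to `C_jˢ`. -/
noncomputable def rescale (s : ℝ) :
    Matrix (ι ⊕ ι') (κ ⊕ κ') ℝ →ₗ[ℝ] Matrix (ι ⊕ ι') (κ ⊕ κ') ℝ where
  toFun M := Matrix.of fun r c => timeWeight s⁻¹ r * M r c * timeWeight s c
  map_add' M M' := by ext r c; simp only [of_apply, Matrix.add_apply]; ring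
  map_smul' c M := by
    ext r c; simp only [of_apply, Matrix.smul_apply, smul_eq_mul, RingHom.id_apply]; ring

lemma rescale_apply (s : ℝ) (M : Matrix (ι ⊕ ι') (κ ⊕ κ') ℝ) (r c) :
    rescale s M r c = timeWeight s⁻¹ r * M r c * timeWeight s c := rfl

lemma rank_rescale [Fintype ι] [Fintype ι'] [Fintype κ] [Fintype κ'] [DecidableEq ι]
    [DecidableEq ι'] [DecidableEq κ] [DecidableEq κ'] {s : ℝ} (hs : s ≠ 0)
    (M : Matrix (ι ⊕ ι') (κ ⊕ κ') ℝ) : (rescale s M).rank = M.rank := by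
  have : rescale s M = (diagonal (timeWeight s⁻¹) : Matrix (ι ⊕ ι') (ι ⊕ ι') ℝ) * M *
      (diagonal (timeWeight s) : Matrix (κ ⊕ κ') (κ ⊕ κ') ℝ) := by
    ext r c
    simp [rescale_apply, diagonal_mul, mul_diagonal]
  rw [this, rank_mul_eq_left_of_isUnit_det, rank_mul_eq_right_of_isUnit_det] <;>
    simp [det_diagonal, timeWeight, hs]

end Rescale

section

variable {m n : ℕ}

def pprojₗ : BM m n →ₗ[ℝ] Matrix (Fin m) (Fin n) ℝ × (Fin m → Fin n → ℝ) where
  toFun := Pproj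
  map_add' _ _ := rfl
  map_smul' _ _ := rfl

lemma pprojₗ_apply (X : BM m n) : pprojₗ X = Pproj X := rfl

lemma Pproj_blk (A : Matrix (Fin m) (Fin n) ℝ) (a : Fin m → ℝ)
    (B : Fin m → Matrix (Fin n) (Fin n) ℝ) (b : Fin m → Fin n → ℝ) :
    Pproj (blk A a B b) = (A, b) := rfl

lemma image_Pproj_iUnion_openSegment {ι : Type*} (X Y : ι → BM m n) :
    Pproj '' ⋃ j, openSegment ℝ (X j) (Y j) =
      ⋃ j, openSegment ℝ (Pproj (X j)) (Pproj (Y j)) := by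
  simp_rw [Set.image_iUnion]
  exact Set.iUnion_congr fun j => image_openSegment ℝ pprojₗ.toAffineMap (X j) (Y j)

def traceFree : Submodule ℝ (BM m n) where
  carrier := {X | ∀ i, ∑ j, X (Sum.inr (i, j)) (Sum.inl j) = 0}
  zero_mem' := by simp
  add_mem' {X Y} hX hY i := by simp [Finset.sum_add_distrib, hX i, hY i]
  smul_mem' c X hX i := by simp [← Finset.mul_sum, hX i]

lemma blk_mem_traceFree_iff (A : Matrix (Fin m) (Fin n) ℝ) (a : Fin m → ℝ)
    (B : Fin m → Matrix (Fin n) (Fin n) ℝ) (b : Fin m → Fin n → ℝ) :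
    blk A a B b ∈ traceFree ↔ ∀ i, (B i).trace = 0 := Iff.rfl

lemma blk_smul_vecMulVec_mem_traceFree (A : Matrix (Fin m) (Fin n) ℝ) (a : Fin m → ℝ)
    (b : Fin m → Fin n → ℝ) (c : ℝ) (β : Fin m → Fin n → ℝ) (α : Fin n → ℝ)
    (hβα : ∀ i, ∑ k, β i k * α k = 0) :
    blk A a (fun i => c • vecMulVec (β i) α) b ∈ traceFree := by
  refine (blk_mem_traceFree_iff _ _ _ _).2 fun i => ?_
  rw [trace_smul, trace_vecMulVec, dotProduct, hβα i, smul_zero]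

lemma mem_Kset_iff (σ : Matrix (Fin m) (Fin n) ℝ → Matrix (Fin m) (Fin n) ℝ) (X : BM m n) :
    X ∈ Kset σ ↔ (Pproj X).2 = σ (Pproj X).1 ∧ X ∈ traceFree :=
  and_congr Matrix.ext_iff Iff.rfl

lemma rescale_blk {s : ℝ} (hs : s ≠ 0) (A : Matrix (Fin m) (Fin n) ℝ) (a : Fin m → ℝ)
    (B : Fin m → Matrix (Fin n) (Fin n) ℝ) (b : Fin m → Fin n → ℝ) :
    rescale s (blk A a B b) = blk A (s • a) (s⁻¹ • B) b := by
  ext (i | q) (k | u) <;> simp [rescale_apply, timeWeight, blk, hs, mul_comm]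

lemma Pproj_rescale {s : ℝ} (hs : s ≠ 0) (M : BM m n) : Pproj (rescale s M) = Pproj M := by
  ext i k
  · simp [Pproj, Ablock, rescale_apply, timeWeight]
  · simp [Pproj, rescale_apply, timeWeight]
    field_simp

end

theorem stmt12_general {m n N : ℕ}
    (σ : Matrix (Fin m) (Fin n) ℝ → Matrix (Fin m) (Fin n) ℝ)
    (Atil : Matrix (Fin m) (Fin n) ℝ) (atil : Fin m → ℝ)
    (Btil : Fin m → Matrix (Fin n) (Fin n) ℝ) (btil : Fin m → Fin n → ℝ)
    (P : BM m n) (hP : P = blk Atil atil Btil btil)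
    (p : Fin N → Fin m → ℝ) (α : Fin N → Fin n → ℝ) (s' : Fin N → ℝ)
    (β : Fin N → Fin m → Fin n → ℝ)
    (C : Fin N → BM m n)
    (hCform : ∀ j, C j = blk (Matrix.vecMulVec (p j) (α j))
      (fun i => s' j * p j i)
      (fun i => Matrix.vecMulVec (β j i) (α j))
      (fun i k => s' j * β j i k))
    (κ : Fin N → ℝ)
    (hC : ∀ j, Matrix.rank (C j) = 1) (hsum : ∑ j, C j = 0)
    -- admissibility of the `C_j`:
    (hadm : ∀ j, α j ≠ 0 ∧ ∀ i, ∑ k, β j i k * α j k = 0)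
    (X Pm : Fin N → BM m n)
    (hPm : ∀ j, Pm j = P + ∑ i ∈ Finset.univ.filter (fun i => i < j), C i)
    (hX : ∀ j, X j = Pm j + κ j • C j)
    (s : ℝ) (hs : s ≠ 0)
    (Ptil : BM m n) (hPtil : Ptil = blk Atil 0 0 btil)
    (Cs : Fin N → BM m n)
    (hCs : ∀ j, Cs j = blk (Matrix.vecMulVec (p j) (α j))
      (fun i => s * s' j * p j i)
      (fun i => (1 / s) • Matrix.vecMulVec (β j i) (α j))
      (fun i k => s' j * β j i k))
    (Xs Pms : Fin N → BM m n)
    (hPms : ∀ j, Pms j = Ptil + ∑ i ∈ Finset.univ.filter (fun i => i < j), Cs i)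
    (hXs : ∀ j, Xs j = Pms j + κ j • Cs j) :
    -- `(X̃_1ˢ, …, X̃_Nˢ)` is an admissible `T_N`-configuration:
    ((∀ j, Matrix.rank (Cs j) = 1) ∧ ∑ j, Cs j = 0 ∧
      (∀ j, α j ≠ 0 ∧ ∀ i, ∑ k, β j i k * α j k = 0)) ∧
    -- same projected T-set:
    Pproj '' (⋃ j, openSegment ℝ (Xs j) (Pms j)) =
      Pproj '' (⋃ j, openSegment ℝ (X j) (Pm j)) ∧
    -- membership in `𝒦` is preserved:
    (∀ j, X j ∈ Kset σ → Xs j ∈ Kset σ) := by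
  have hCs_eq : ∀ j, Cs j = rescale s (C j) := by
    intro j
    rw [hCs, hCform, rescale_blk hs, one_div]
    congr 1
    funext i
    simp [mul_assoc]
  have hPms_proj : ∀ j, Pproj (Pms j) = Pproj (Pm j) := by
    intro j
    simp only [← pprojₗ_apply, hPms, hPm, map_add, map_sum, hCs_eq]
    simp only [pprojₗ_apply, Pproj_rescale hs, hP, hPtil, Pproj_blk]
  have hXs_proj : ∀ j, Pproj (Xs j) = Pproj (X j) := by
    intro j
    simp only [← pprojₗ_apply, hXs, hX, map_add, map_smul]
    simp only [pprojₗ_apply, hPms_proj, hCs_eq, Pproj_rescale hs]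
  have hCs_traceFree : ∀ j, Cs j ∈ traceFree := fun j => by
    rw [hCs]
    exact blk_smul_vecMulVec_mem_traceFree _ _ _ _ _ _ (hadm j).2
  refine ⟨⟨fun j => ?_, ?_, hadm⟩, ?_, fun j hXj => ?_⟩
  · rw [hCs_eq, rank_rescale hs, hC]
  · simp only [hCs_eq, ← map_sum, hsum, map_zero]
  · simp only [image_Pproj_iUnion_openSegment, hXs_proj, hPms_proj]
  · refine (mem_Kset_iff σ _).2 ⟨?_, ?_⟩
    · rw [hXs_proj]
      exact ((mem_Kset_iff σ _).1 hXj).1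
    · rw [hXs, hPms, hPtil]
      have hPtil_traceFree : blk Atil 0 0 btil ∈ traceFree :=
        (blk_mem_traceFree_iff _ _ _ _).2 fun _ => trace_zero _ _
      exact add_mem (add_mem hPtil_traceFree (sum_mem fun i _ => hCs_traceFree i))
        (Submodule.smul_mem _ _ (hCs_traceFree j))

/-- Rescaling in the time variable: from an admissible `T_N`-configuration
`(X_1, …, X_N)` in `𝒦` with data `P, C_j, κ_j`, the rescaled configuration
`(X̃_1ˢ, …, X̃_Nˢ)` with data `P̃, C_jˢ, κ_j` is again an admissible
`T_N`-configuration, has the same diagonal projection of its T-set,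
and stays in `𝒦`. -/
theorem stmt12 {m n N : ℕ}
    (σ : Matrix (Fin m) (Fin n) ℝ → Matrix (Fin m) (Fin n) ℝ)
    (Atil : Matrix (Fin m) (Fin n) ℝ) (atil : Fin m → ℝ)
    (Btil : Fin m → Matrix (Fin n) (Fin n) ℝ) (btil : Fin m → Fin n → ℝ)
    (P : BM m n) (hP : P = blk Atil atil Btil btil)
    (p : Fin N → Fin m → ℝ) (α : Fin N → Fin n → ℝ) (s' : Fin N → ℝ)
    (β : Fin N → Fin m → Fin n → ℝ)
    (C : Fin N → BM m n)
    (hCform : ∀ j, C j = blk (Matrix.vecMulVec (p j) (α j))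
      (fun i => s' j * p j i)
      (fun i => Matrix.vecMulVec (β j i) (α j))
      (fun i k => s' j * β j i k))
    (κ : Fin N → ℝ) (hκ : ∀ j, 1 < κ j)
    (hC : ∀ j, Matrix.rank (C j) = 1) (hsum : ∑ j, C j = 0)
    -- admissibility of the `C_j`:
    (hadm : ∀ j, α j ≠ 0 ∧ ∀ i, ∑ k, β j i k * α j k = 0)
    (X Pm : Fin N → BM m n)
    (hPm : ∀ j, Pm j = P + ∑ i ∈ Finset.univ.filter (fun i => i < j), C i)
    (hX : ∀ j, X j = Pm j + κ j • C j)
    (s : ℝ) (hs : s ≠ 0)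
    (Ptil : BM m n) (hPtil : Ptil = blk Atil 0 0 btil)
    (Cs : Fin N → BM m n)
    (hCs : ∀ j, Cs j = blk (Matrix.vecMulVec (p j) (α j))
      (fun i => s * s' j * p j i)
      (fun i => (1 / s) • Matrix.vecMulVec (β j i) (α j))
      (fun i k => s' j * β j i k))
    (Xs Pms : Fin N → BM m n)
    (hPms : ∀ j, Pms j = Ptil + ∑ i ∈ Finset.univ.filter (fun i => i < j), Cs i)
    (hXs : ∀ j, Xs j = Pms j + κ j • Cs j) :
    -- `(X̃_1ˢ, …, X̃_Nˢ)` is an admissible `T_N`-configuration: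
    ((∀ j, Matrix.rank (Cs j) = 1) ∧ ∑ j, Cs j = 0 ∧
      (∀ j, α j ≠ 0 ∧ ∀ i, ∑ k, β j i k * α j k = 0)) ∧
    -- same projected T-set:
    Pproj '' (⋃ j, openSegment ℝ (Xs j) (Pms j)) =
      Pproj '' (⋃ j, openSegment ℝ (X j) (Pm j)) ∧
    -- membership in `𝒦` is preserved:
    (∀ j, X j ∈ Kset σ → Xs j ∈ Kset σ) :=
  stmt12_general σ Atil atil Btil btil P hP p α s' β C hCform κ hC hsum hadm X Pm hPm hX s hs Ptil
    hPtil Cs hCs Xs Pms hPms hXs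
end

section
/- Let $(X_1,\dots,X_N)$ be a $T_N$-configuration in $\mathbb{M}^{p\times q}$ with data $P$, rank-one $C_j$, $\kappa_j>1$. Then $\bar{T}(X_1,\dots,X_N) = \cup_{j=1}^N[X_j,P_j]$ is contained in the rank-one convex hull $\{X_1,\dots,X_N\}^{rc}$, i.e., every nonnegative rank-one convex function $g$ vanishing on $\{X_1,\dots,X_N\}$ vanishes on every closed segment $[X_j,P_j]$. -/
/-- The closed T-set of a `T_N`-configuration is contained in the rank-one convex
hull of `{X_1, …, X_N}`: every nonnegative rank-one convex function vanishing on the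
`X_j` vanishes on every closed segment `[X_j, P_j]`. -/
theorem stmt19 {p q N : ℕ}
    (P : Matrix (Fin p) (Fin q) ℝ) (C : Fin N → Matrix (Fin p) (Fin q) ℝ)
    (κ : Fin N → ℝ)
    (hC : ∀ j, Matrix.rank (C j) = 1) (hsum : ∑ j, C j = 0) (hκ : ∀ j, 1 < κ j)
    (X Pm : Fin N → Matrix (Fin p) (Fin q) ℝ)
    (hPm : ∀ j, Pm j = P + ∑ i ∈ Finset.univ.filter (fun i => i < j), C i)
    (hX : ∀ j, X j = Pm j + κ j • C j)
    (g : Matrix (Fin p) (Fin q) ℝ → ℝ)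
    (hg : RankOneConvex g) (hg0 : ∀ Z, 0 ≤ g Z) (hgX : ∀ j, g (X j) = 0) :
    ∀ j, ∀ Z ∈ segment ℝ (X j) (Pm j), g Z = 0 := by
  intro j Z hZ
  have hN : 0 < N := j.pos
  have hκpos : ∀ i : Fin N, (0:ℝ) < κ i := fun i => lt_trans one_pos (hκ i)
  have hlam : ∀ i : Fin N, 0 ≤ 1 - 1 / κ i := by
    intro i
    have h1 : 1 / κ i ≤ 1 := by
      rw [div_le_one (hκpos i)]; exact le_of_lt (hκ i)
    linarith
  have hlamlt : ∀ i : Fin N, 1 - 1 / κ i < 1 := by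
    intro i
    have : 0 < 1 / κ i := div_pos one_pos (hκpos i)
    linarith
  -- step lemma
  have hstep : ∀ i : Fin N, g (Pm i + C i) ≤ (1 - 1 / κ i) * g (Pm i) := by
    intro i
    have hconv := hg (Pm i) (C i) (hC i)
    have hkne : κ i ≠ 0 := ne_of_gt (hκpos i)
    have h1 : 1 / κ i * κ i = 1 := by field_simp
    have key := hconv.2 (Set.mem_univ (κ i)) (Set.mem_univ (0:ℝ))
      (div_nonneg zero_le_one (le_of_lt (hκpos i))) (hlam i) (by ring)
    simp only [smul_eq_mul, mul_zero, add_zero, zero_smul] at key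
    rw [h1] at key
    have hXi : Pm i + (κ i) • C i = X i := (hX i).symm
    rw [one_smul] at key
    rw [hXi, hgX i, mul_zero, zero_add] at key
    exact key
  -- inductive bound
  have hind : ∀ k : ℕ, ∀ hk : k < N,
      g (Pm ⟨k, hk⟩) ≤ (∏ i ∈ Finset.univ.filter (fun i : Fin N => (i:ℕ) < k),
        (1 - 1 / κ i)) * g P := by
    intro k
    induction k with
    | zero =>
      intro hk
      have : Pm ⟨0, hk⟩ = P := by
        rw [hPm]
        have : Finset.univ.filter (fun i : Fin N => i < (⟨0, hk⟩ : Fin N)) = ∅ := by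
          ext i; simp [Fin.lt_def]
        rw [this]; simp
      rw [this]
      have : Finset.univ.filter (fun i : Fin N => (i:ℕ) < 0) = ∅ := by
        ext i; simp
      rw [this]; simp
    | succ k ih =>
      intro hk1
      have hk : k < N := Nat.lt_of_succ_lt hk1
      have hnm : (⟨k, hk⟩ : Fin N) ∉ Finset.univ.filter
          (fun i : Fin N => i < (⟨k, hk⟩ : Fin N)) := by
        simp [Fin.lt_def]
      have hfil : Finset.univ.filter (fun i : Fin N => i < (⟨k+1, hk1⟩ : Fin N)) =
          insert ⟨k, hk⟩ (Finset.univ.filter (fun i : Fin N => i < (⟨k, hk⟩ : Fin N))) := by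
        ext i; simp [Fin.lt_def, Fin.ext_iff]; omega
      have hPmsucc : Pm ⟨k+1, hk1⟩ = Pm ⟨k, hk⟩ + C ⟨k, hk⟩ := by
        rw [hPm, hPm, hfil, Finset.sum_insert hnm]
        abel
      have hnm2 : (⟨k, hk⟩ : Fin N) ∉ Finset.univ.filter
          (fun i : Fin N => (i:ℕ) < k) := by simp
      have hfil2 : Finset.univ.filter (fun i : Fin N => (i:ℕ) < k+1) =
          insert ⟨k, hk⟩ (Finset.univ.filter (fun i : Fin N => (i:ℕ) < k)) := by
        ext i; simp [Fin.ext_iff]; omega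
      rw [hPmsucc, hfil2, Finset.prod_insert hnm2]
      calc g (Pm ⟨k, hk⟩ + C ⟨k, hk⟩) ≤ (1 - 1 / κ ⟨k, hk⟩) * g (Pm ⟨k, hk⟩) :=
            hstep _
        _ ≤ (1 - 1 / κ ⟨k, hk⟩) * ((∏ i ∈ Finset.univ.filter
              (fun i : Fin N => (i:ℕ) < k), (1 - 1 / κ i)) * g P) :=
            mul_le_mul_of_nonneg_left (ih hk) (hlam _)
        _ = (1 - 1 / κ ⟨k, hk⟩) * (∏ i ∈ Finset.univ.filter
              (fun i : Fin N => (i:ℕ) < k), (1 - 1 / κ i)) * g P := by ring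
  -- close the cycle: g P = 0
  set last : Fin N := ⟨N - 1, Nat.sub_lt hN one_pos⟩ with hlast
  have hnmlast : last ∉ Finset.univ.filter (fun i : Fin N => (i:ℕ) < N - 1) := by
    simp [hlast]
  have hfilL : (Finset.univ : Finset (Fin N)) =
      insert last (Finset.univ.filter (fun i : Fin N => (i:ℕ) < N - 1)) := by
    ext i
    simp only [Finset.mem_univ, Finset.mem_insert, Finset.mem_filter, true_and, true_iff]
    have := i.isLt
    rcases Nat.lt_or_ge (i:ℕ) (N-1) with h | h
    · exact Or.inr h
    · left; apply Fin.ext; simp [hlast]; omega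
  have hPlast : Pm last + C last = P := by
    rw [hPm]
    have : (Finset.univ.filter (fun i : Fin N => i < last)) =
        Finset.univ.filter (fun i : Fin N => (i:ℕ) < N - 1) := by
      ext i; simp [Fin.lt_def, hlast]
    rw [this]
    have hsum' : (∑ i ∈ Finset.univ.filter (fun i : Fin N => (i:ℕ) < N - 1), C i)
        + C last = 0 := by
      rw [add_comm, ← Finset.sum_insert hnmlast, ← hfilL, hsum]
    calc P + (∑ i ∈ Finset.univ.filter (fun i : Fin N => (i:ℕ) < N - 1), C i) + C last
        = P + ((∑ i ∈ Finset.univ.filter (fun i : Fin N => (i:ℕ) < N - 1), C i)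
          + C last) := by abel
      _ = P := by rw [hsum']; abel
  set L : ℝ := ∏ i : Fin N, (1 - 1 / κ i) with hL
  have hgP : g P ≤ L * g P := by
    have h1 := hstep last
    have h2 := hind (N-1) (Nat.sub_lt hN one_pos)
    rw [hPlast] at h1
    calc g P ≤ (1 - 1 / κ last) * g (Pm last) := h1
      _ ≤ (1 - 1 / κ last) * ((∏ i ∈ Finset.univ.filter
            (fun i : Fin N => (i:ℕ) < N - 1), (1 - 1 / κ i)) * g P) :=
          mul_le_mul_of_nonneg_left h2 (hlam _)
      _ = L * g P := by
          rw [hL]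
          conv_rhs => rw [hfilL]
          rw [Finset.prod_insert hnmlast]; ring
  have hLlt : L < 1 := by
    rw [hL]
    conv_lhs => rw [hfilL]
    rw [Finset.prod_insert hnmlast]
    calc (1 - 1 / κ last) * ∏ i ∈ Finset.univ.filter
          (fun i : Fin N => (i:ℕ) < N - 1), (1 - 1 / κ i)
        ≤ (1 - 1 / κ last) * 1 := by
          apply mul_le_mul_of_nonneg_left _ (hlam _)
          apply Finset.prod_le_one
          · intro i _; exact hlam i
          · intro i _; linarith [hlamlt i]
      _ < 1 := by rw [mul_one]; exact hlamlt last
  have hgP0 : g P = 0 := by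
    have := hg0 P
    nlinarith
  -- hence g (Pm j) = 0
  have hPmj0 : g (Pm j) = 0 := by
    have h := hind j.val j.isLt
    have : (⟨j.val, j.isLt⟩ : Fin N) = j := Fin.ext rfl
    rw [this, hgP0, mul_zero] at h
    exact le_antisymm h (hg0 _)
  -- now the segment
  obtain ⟨a, b, ha, hb, hab, rfl⟩ := hZ
  have hconv := hg (Pm j) (C j) (hC j)
  have key := hconv.2 (Set.mem_univ (κ j)) (Set.mem_univ (0:ℝ)) ha hb hab
  simp only [smul_eq_mul, mul_zero, add_zero, zero_smul] at key
  have hfκ : g (Pm j + κ j • C j) = 0 := by rw [← hX j]; exact hgX j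
  rw [hfκ, hPmj0, mul_zero, mul_zero, add_zero] at key
  have hZeq : Pm j + (a * κ j) • C j = a • X j + b • Pm j := by
    rw [hX j]
    have hb' : b = 1 - a := by linarith
    rw [hb']
    module
  rw [hZeq] at key
  exact le_antisymm key (hg0 _)
end
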